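/- Let Λ = {(W_j, Λ_j, v_j)}_{j∈J} and Γ = {(V_j, Γ_j, v_j)}_{j∈J} be g-fusion frames for H with bounds (A₁, B₁) and (A₂, B₂) respectively, with g-fusion frame operators S_Λ, S_Γ and canonical dual g-fusion frames Λ° and Γ°. If there exists D > 0 such that ∑_{j∈J} v_j² ‖(Λ_j P_{W_j} − Γ_j P_{V_j}) f‖² ≤ D‖f‖² for all f ∈ H, then for all f ∈ H, ∑_{j∈J} v_j² ‖(Λ_j P_{W_j} S_Λ⁻¹ − Γ_j P_{V_j} S_Γ⁻¹) f‖² ≤ D·((A₁ + B₁ + √B₁·√B₂)/(A₁ A₂))²·‖f‖², i.e. the canonical dual frames satisfy ∑_{j∈J} v_j² ‖(Λ_j° P_{W_j°} − Γ_j° P_{V_j°}) f‖² ≤ D·((A₁ + B₁ + √B₁·√B₂)/(A₁ A₂))²·‖f‖². -/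

import Mathlib

noncomputable section

open ContinuousLinearMap
open scoped InnerProductSpace

/-- Orthogonal projection onto a closed subspace, as an endomorphism of `H`. -/
noncomputable def gProj {H : Type*} [NormedAddCommGroup H] [InnerProductSpace ℂ H]
    (W : Submodule ℂ H) [CompleteSpace W] : H →L[ℂ] H :=
  W.subtypeL.comp (Submodule.orthogonalProjection W)

private lemma my_summable_mul {J : Type*} {x y : J → ℝ} (hx : ∀ j, 0 ≤ x j) (hy : ∀ j, 0 ≤ y j)
    (hx2 : Summable fun j => x j ^ 2) (hy2 : Summable fun j => y j ^ 2) :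
    Summable fun j => x j * y j := by
  refine Summable.of_nonneg_of_le (fun j => mul_nonneg (hx j) (hy j)) (fun j => ?_) (hx2.add hy2)
  nlinarith [sq_nonneg (x j - y j), mul_nonneg (hx j) (hy j)]

private lemma my_tsum_cs {J : Type*} {x y : J → ℝ} (hx : ∀ j, 0 ≤ x j) (hy : ∀ j, 0 ≤ y j)
    (hx2 : Summable fun j => x j ^ 2) (hy2 : Summable fun j => y j ^ 2) :
    ∑' j, x j * y j ≤ Real.sqrt (∑' j, x j ^ 2) * Real.sqrt (∑' j, y j ^ 2) := by
  refine Summable.tsum_le_of_sum_le (my_summable_mul hx hy hx2 hy2) (fun s => ?_)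
  have h1 : (∑ j ∈ s, x j * y j) ^ 2 ≤ (∑ j ∈ s, x j ^ 2) * ∑ j ∈ s, y j ^ 2 :=
    Finset.sum_mul_sq_le_sq_mul_sq s x y
  have hs : ∑ j ∈ s, x j * y j ≤
      Real.sqrt (∑ j ∈ s, x j ^ 2) * Real.sqrt (∑ j ∈ s, y j ^ 2) := by
    rw [← Real.sqrt_mul (Finset.sum_nonneg fun j _ => sq_nonneg (x j))]
    calc ∑ j ∈ s, x j * y j
        = Real.sqrt ((∑ j ∈ s, x j * y j) ^ 2) :=
          (Real.sqrt_sq (Finset.sum_nonneg fun j _ => mul_nonneg (hx j) (hy j))).symm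
      _ ≤ _ := Real.sqrt_le_sqrt h1
  refine hs.trans (mul_le_mul (Real.sqrt_le_sqrt ?_) (Real.sqrt_le_sqrt ?_)
    (Real.sqrt_nonneg _) (Real.sqrt_nonneg _))
  · exact Summable.sum_le_tsum s (fun j _ => sq_nonneg _) hx2
  · exact Summable.sum_le_tsum s (fun j _ => sq_nonneg _) hy2

private lemma my_summable_add_sq {J : Type*} {x y : J → ℝ} (hx : ∀ j, 0 ≤ x j)
    (hy : ∀ j, 0 ≤ y j)
    (hx2 : Summable fun j => x j ^ 2) (hy2 : Summable fun j => y j ^ 2) :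
    Summable fun j => (x j + y j) ^ 2 := by
  have hm := my_summable_mul hx hy hx2 hy2
  have hexp : ∀ j, (x j + y j) ^ 2 = x j ^ 2 + 2 * (x j * y j) + y j ^ 2 := fun j => by ring
  simp only [hexp]; exact (hx2.add (hm.mul_left 2)).add hy2

private lemma my_tsum_minkowski {J : Type*} {x y : J → ℝ} (hx : ∀ j, 0 ≤ x j) (hy : ∀ j, 0 ≤ y j)
    (hx2 : Summable fun j => x j ^ 2) (hy2 : Summable fun j => y j ^ 2) :
    ∑' j, (x j + y j) ^ 2 ≤
      (Real.sqrt (∑' j, x j ^ 2) + Real.sqrt (∑' j, y j ^ 2)) ^ 2 := by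
  have hm := my_summable_mul hx hy hx2 hy2
  have hexp : ∀ j, (x j + y j) ^ 2 = x j ^ 2 + 2 * (x j * y j) + y j ^ 2 := fun j => by ring
  calc ∑' j, (x j + y j) ^ 2
      = (∑' j, x j ^ 2) + 2 * (∑' j, x j * y j) + ∑' j, y j ^ 2 := by
        simp only [hexp]
        rw [Summable.tsum_add (hx2.add (hm.mul_left 2)) hy2, Summable.tsum_add hx2 (hm.mul_left 2), tsum_mul_left]
    _ ≤ (∑' j, x j ^ 2) + 2 * (Real.sqrt (∑' j, x j ^ 2) * Real.sqrt (∑' j, y j ^ 2))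
          + ∑' j, y j ^ 2 := by
        have := my_tsum_cs hx hy hx2 hy2; linarith
    _ = _ := by
        rw [add_sq, Real.sq_sqrt (tsum_nonneg fun j => sq_nonneg _),
          Real.sq_sqrt (tsum_nonneg fun j => sq_nonneg _)]
        ring

private lemma my_key {H : Type*} [NormedAddCommGroup H] [InnerProductSpace ℂ H] [CompleteSpace H]
    {J : Type*} {G : J → Type*} [∀ j, NormedAddCommGroup (G j)] [∀ j, InnerProductSpace ℂ (G j)]
    [∀ j, CompleteSpace (G j)]
    (W : J → Submodule ℂ H) [∀ j, CompleteSpace (W j)] (v : J → ℝ) (Λ : ∀ j, H →L[ℂ] G j)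
    {g Sg : H}
    (hS : HasSum (fun j => (v j) ^ 2 • gProj (W j) (adjoint (Λ j) (Λ j (gProj (W j) g)))) Sg)
    (h : H) :
    HasSum (fun j => (v j) ^ 2 * RCLike.re (⟪Λ j (gProj (W j) h), Λ j (gProj (W j) g)⟫_ℂ))
      (RCLike.re ⟪h, Sg⟫_ℂ) := by
  have hmap := hS.mapL (RCLike.reCLM.comp ((innerSL ℂ h).restrictScalars ℝ))
  replace hmap : HasSum (fun j => RCLike.reCLM.comp ((innerSL ℂ h).restrictScalars ℝ)
      ((v j) ^ 2 • gProj (W j) (adjoint (Λ j) (Λ j (gProj (W j) g))))) _ := hmap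
  convert hmap using 2 with j
  have hP : ∀ x : H, ⟪h, gProj (W j) x⟫_ℂ = ⟪gProj (W j) h, x⟫_ℂ := by
    intro x
    conv_lhs => rw [show gProj (W j) = adjoint (gProj (W j)) from
      ((isSelfAdjoint_starProjection (W j)).adjoint_eq).symm]
    exact adjoint_inner_right _ _ _
  simp only [ContinuousLinearMap.coe_comp', Function.comp_apply,
    ContinuousLinearMap.coe_restrictScalars', innerSL_apply_apply,
    inner_smul_right_eq_smul, hP, adjoint_inner_right]
  simp [RCLike.smul_re]
  simp [← Complex.ofReal_pow]
  rfl

/-- If `∑ j, v j ² ‖(Λ j P_{W j} − Γ j P_{V j}) f‖² ≤ D ‖f‖²`, then the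
canonical dual g-fusion frames satisfy
`∑ j, v j ² ‖(Λ j P_{W j} S_Λ⁻¹ − Γ j P_{V j} S_Γ⁻¹) f‖² ≤
  D ((A₁ + B₁ + √B₁ √B₂)/(A₁ A₂))² ‖f‖²`. -/
theorem dual_gFusion_perturbation
    {H : Type*} [NormedAddCommGroup H] [InnerProductSpace ℂ H] [CompleteSpace H]
    {J : Type*} [Countable J]
    {G : J → Type*} [∀ j, NormedAddCommGroup (G j)] [∀ j, InnerProductSpace ℂ (G j)]
    [∀ j, CompleteSpace (G j)]
    (W V : J → Submodule ℂ H) [∀ j, CompleteSpace (W j)] [∀ j, CompleteSpace (V j)]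
    (v : J → ℝ) (hv : ∀ j, 0 < v j)
    (Λ Γ : ∀ j, H →L[ℂ] G j)
    (A₁ B₁ A₂ B₂ : ℝ) (hA₁ : 0 < A₁) (hAB₁ : A₁ ≤ B₁) (hA₂ : 0 < A₂) (hAB₂ : A₂ ≤ B₂)
    (hΛlow : ∀ f : H,
      A₁ * ‖f‖ ^ 2 ≤ ∑' j, (v j) ^ 2 * ‖Λ j (gProj (W j) f)‖ ^ 2)
    (hΛup : ∀ f : H,
      (∑' j, (v j) ^ 2 * ‖Λ j (gProj (W j) f)‖ ^ 2) ≤ B₁ * ‖f‖ ^ 2)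
    (hΓlow : ∀ f : H,
      A₂ * ‖f‖ ^ 2 ≤ ∑' j, (v j) ^ 2 * ‖Γ j (gProj (V j) f)‖ ^ 2)
    (hΓup : ∀ f : H,
      (∑' j, (v j) ^ 2 * ‖Γ j (gProj (V j) f)‖ ^ 2) ≤ B₂ * ‖f‖ ^ 2)
    (SΛ SΓ : H ≃L[ℂ] H)
    (hSΛ : ∀ f : H, HasSum
      (fun j => (v j) ^ 2 • gProj (W j) (adjoint (Λ j) (Λ j (gProj (W j) f)))) (SΛ f))
    (hSΓ : ∀ f : H, HasSum
      (fun j => (v j) ^ 2 • gProj (V j) (adjoint (Γ j) (Γ j (gProj (V j) f)))) (SΓ f))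
    (D : ℝ) (hD : 0 < D)
    (hpert : ∀ f : H,
      (∑' j, (v j) ^ 2 * ‖Λ j (gProj (W j) f) - Γ j (gProj (V j) f)‖ ^ 2) ≤ D * ‖f‖ ^ 2)
    (hpertsum : ∀ f : H,
      Summable fun j => (v j) ^ 2 * ‖Λ j (gProj (W j) f) - Γ j (gProj (V j) f)‖ ^ 2) :
    ∀ f : H,
      (∑' j, (v j) ^ 2 *
          ‖Λ j (gProj (W j) (SΛ.symm f)) - Γ j (gProj (V j) (SΓ.symm f))‖ ^ 2) ≤
        D * ((A₁ + B₁ + Real.sqrt B₁ * Real.sqrt B₂) / (A₁ * A₂)) ^ 2 * ‖f‖ ^ 2 := by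
  have hB₁ : (0:ℝ) < B₁ := lt_of_lt_of_le hA₁ hAB₁
  have hB₂ : (0:ℝ) < B₂ := lt_of_lt_of_le hA₂ hAB₂
  -- norm-squared HasSums
  have hΛnorm : ∀ g : H, HasSum (fun j => (v j) ^ 2 * ‖Λ j (gProj (W j) g)‖ ^ 2)
      (RCLike.re ⟪g, (SΛ : H →L[ℂ] H) g⟫_ℂ) := by
    intro g
    have := my_key W v Λ (hSΛ g) g
    simpa only [inner_self_eq_norm_sq, ContinuousLinearEquiv.coe_coe] using this
  have hΓnorm : ∀ g : H, HasSum (fun j => (v j) ^ 2 * ‖Γ j (gProj (V j) g)‖ ^ 2)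
      (RCLike.re ⟪g, (SΓ : H →L[ℂ] H) g⟫_ℂ) := by
    intro g
    have := my_key V v Γ (hSΓ g) g
    simpa only [inner_self_eq_norm_sq, ContinuousLinearEquiv.coe_coe] using this
  -- lower bounds on S
  have hΛinj : ∀ g : H, A₁ * ‖g‖ ≤ ‖(SΛ : H →L[ℂ] H) g‖ := by
    intro g
    rcases eq_or_ne g 0 with rfl | hg
    · simp
    have h1 := hΛlow g
    rw [(hΛnorm g).tsum_eq] at h1
    have h2 : RCLike.re ⟪g, (SΛ : H →L[ℂ] H) g⟫_ℂ ≤ ‖g‖ * ‖(SΛ : H →L[ℂ] H) g‖ :=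
      re_inner_le_norm _ _
    have hgpos : 0 < ‖g‖ := norm_pos_iff.mpr hg
    nlinarith
  have hΓinj : ∀ g : H, A₂ * ‖g‖ ≤ ‖(SΓ : H →L[ℂ] H) g‖ := by
    intro g
    rcases eq_or_ne g 0 with rfl | hg
    · simp
    have h1 := hΓlow g
    rw [(hΓnorm g).tsum_eq] at h1
    have h2 : RCLike.re ⟪g, (SΓ : H →L[ℂ] H) g⟫_ℂ ≤ ‖g‖ * ‖(SΓ : H →L[ℂ] H) g‖ :=
      re_inner_le_norm _ _
    have hgpos : 0 < ‖g‖ := norm_pos_iff.mpr hg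
    nlinarith
  have hΛsymm : ∀ f : H, ‖SΛ.symm f‖ ≤ A₁⁻¹ * ‖f‖ := by
    intro f
    have h := hΛinj (SΛ.symm f)
    simp only [ContinuousLinearEquiv.coe_coe, ContinuousLinearEquiv.apply_symm_apply] at h
    rw [inv_mul_eq_div, le_div_iff₀ hA₁, mul_comm]
    exact h
  have hΓsymm : ∀ f : H, ‖SΓ.symm f‖ ≤ A₂⁻¹ * ‖f‖ := by
    intro f
    have h := hΓinj (SΓ.symm f)
    simp only [ContinuousLinearEquiv.coe_coe, ContinuousLinearEquiv.apply_symm_apply] at h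
    rw [inv_mul_eq_div, le_div_iff₀ hA₂, mul_comm]
    exact h
  -- difference bound
  have hdiff : ∀ g : H, ‖(SΛ : H →L[ℂ] H) g - (SΓ : H →L[ℂ] H) g‖ ≤
      Real.sqrt D * (Real.sqrt B₁ + Real.sqrt B₂) * ‖g‖ := by
    intro g
    set h := (SΛ : H →L[ℂ] H) g - (SΓ : H →L[ℂ] H) g with hh
    have hsub : HasSum (fun j => (v j) ^ 2 * RCLike.re (⟪Λ j (gProj (W j) h), Λ j (gProj (W j) g)⟫_ℂ)
        - (v j) ^ 2 * RCLike.re (⟪Γ j (gProj (V j) h), Γ j (gProj (V j) g)⟫_ℂ))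
        (RCLike.re ⟪h, (SΛ : H →L[ℂ] H) g⟫_ℂ - RCLike.re ⟪h, (SΓ : H →L[ℂ] H) g⟫_ℂ) :=
      (my_key W v Λ (hSΛ g) h).sub (my_key V v Γ (hSΓ g) h)
    have hnormsq : ‖h‖ ^ 2 =
        RCLike.re ⟪h, (SΛ : H →L[ℂ] H) g⟫_ℂ - RCLike.re ⟪h, (SΓ : H →L[ℂ] H) g⟫_ℂ := by
      rw [← inner_self_eq_norm_sq (𝕜 := ℂ) h]
      conv_lhs => rw [hh]
      rw [inner_sub_right, map_sub]
    -- termwise bound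
    set x1 : J → ℝ := fun j => v j * ‖Λ j (gProj (W j) h) - Γ j (gProj (V j) h)‖ with hx1
    set x2 : J → ℝ := fun j => v j * ‖Λ j (gProj (W j) g)‖ with hx2
    set y1 : J → ℝ := fun j => v j * ‖Γ j (gProj (V j) h)‖ with hy1
    set y2 : J → ℝ := fun j => v j * ‖Λ j (gProj (W j) g) - Γ j (gProj (V j) g)‖ with hy2
    have hterm : ∀ j, (v j) ^ 2 * RCLike.re (⟪Λ j (gProj (W j) h), Λ j (gProj (W j) g)⟫_ℂ)
        - (v j) ^ 2 * RCLike.re (⟪Γ j (gProj (V j) h), Γ j (gProj (V j) g)⟫_ℂ)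
        ≤ x1 j * x2 j + y1 j * y2 j := by
      intro j
      have hsplit : ⟪Λ j (gProj (W j) h), Λ j (gProj (W j) g)⟫_ℂ
          - ⟪Γ j (gProj (V j) h), Γ j (gProj (V j) g)⟫_ℂ
          = ⟪Λ j (gProj (W j) h) - Γ j (gProj (V j) h), Λ j (gProj (W j) g)⟫_ℂ
            + ⟪Γ j (gProj (V j) h), Λ j (gProj (W j) g) - Γ j (gProj (V j) g)⟫_ℂ := by
        rw [inner_sub_left, inner_sub_right]; ring
      have h1 : RCLike.re (⟪Λ j (gProj (W j) h) - Γ j (gProj (V j) h), Λ j (gProj (W j) g)⟫_ℂ)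
          ≤ ‖Λ j (gProj (W j) h) - Γ j (gProj (V j) h)‖ * ‖Λ j (gProj (W j) g)‖ :=
        re_inner_le_norm _ _
      have h2 : RCLike.re (⟪Γ j (gProj (V j) h), Λ j (gProj (W j) g) - Γ j (gProj (V j) g)⟫_ℂ)
          ≤ ‖Γ j (gProj (V j) h)‖ * ‖Λ j (gProj (W j) g) - Γ j (gProj (V j) g)‖ :=
        re_inner_le_norm _ _
      have hvj := (hv j).le
      have := sq_nonneg (v j)
      calc (v j) ^ 2 * RCLike.re (⟪Λ j (gProj (W j) h), Λ j (gProj (W j) g)⟫_ℂ)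
          - (v j) ^ 2 * RCLike.re (⟪Γ j (gProj (V j) h), Γ j (gProj (V j) g)⟫_ℂ)
          = (v j) ^ 2 * (RCLike.re (⟪Λ j (gProj (W j) h), Λ j (gProj (W j) g)⟫_ℂ)
            - RCLike.re (⟪Γ j (gProj (V j) h), Γ j (gProj (V j) g)⟫_ℂ)) := by ring
        _ = (v j) ^ 2 * RCLike.re (⟪Λ j (gProj (W j) h), Λ j (gProj (W j) g)⟫_ℂ
            - ⟪Γ j (gProj (V j) h), Γ j (gProj (V j) g)⟫_ℂ) := by
            rw [show RCLike.re (⟪Λ j (gProj (W j) h), Λ j (gProj (W j) g)⟫_ℂ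
            - ⟪Γ j (gProj (V j) h), Γ j (gProj (V j) g)⟫_ℂ)
            = RCLike.re (⟪Λ j (gProj (W j) h), Λ j (gProj (W j) g)⟫_ℂ)
            - RCLike.re (⟪Γ j (gProj (V j) h), Γ j (gProj (V j) g)⟫_ℂ) from map_sub RCLike.re _ _]
        _ = (v j) ^ 2 * (RCLike.re (⟪Λ j (gProj (W j) h) - Γ j (gProj (V j) h), Λ j (gProj (W j) g)⟫_ℂ)
              + RCLike.re (⟪Γ j (gProj (V j) h), Λ j (gProj (W j) g) - Γ j (gProj (V j) g)⟫_ℂ)) := by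
            rw [hsplit]
            rw [show RCLike.re (⟪Λ j (gProj (W j) h) - Γ j (gProj (V j) h), Λ j (gProj (W j) g)⟫_ℂ
              + ⟪Γ j (gProj (V j) h), Λ j (gProj (W j) g) - Γ j (gProj (V j) g)⟫_ℂ)
              = RCLike.re (⟪Λ j (gProj (W j) h) - Γ j (gProj (V j) h), Λ j (gProj (W j) g)⟫_ℂ)
              + RCLike.re (⟪Γ j (gProj (V j) h), Λ j (gProj (W j) g) - Γ j (gProj (V j) g)⟫_ℂ)
              from map_add RCLike.re _ _]
        _ ≤ x1 j * x2 j + y1 j * y2 j := by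
            simp only [hx1, hx2, hy1, hy2]
            nlinarith
    have hx1nn : ∀ j, 0 ≤ x1 j := fun j => mul_nonneg (hv j).le (norm_nonneg _)
    have hx2nn : ∀ j, 0 ≤ x2 j := fun j => mul_nonneg (hv j).le (norm_nonneg _)
    have hy1nn : ∀ j, 0 ≤ y1 j := fun j => mul_nonneg (hv j).le (norm_nonneg _)
    have hy2nn : ∀ j, 0 ≤ y2 j := fun j => mul_nonneg (hv j).le (norm_nonneg _)
    have sx1 : Summable fun j => x1 j ^ 2 := by
      simp only [hx1, mul_pow]; exact hpertsum h
    have sx2 : Summable fun j => x2 j ^ 2 := by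
      simp only [hx2, mul_pow]; exact (hΛnorm g).summable
    have sy1 : Summable fun j => y1 j ^ 2 := by
      simp only [hy1, mul_pow]; exact (hΓnorm h).summable
    have sy2 : Summable fun j => y2 j ^ 2 := by
      simp only [hy2, mul_pow]; exact hpertsum g
    have tx1 : ∑' j, x1 j ^ 2 ≤ D * ‖h‖ ^ 2 := by
      simp only [hx1, mul_pow]; exact hpert h
    have tx2 : ∑' j, x2 j ^ 2 ≤ B₁ * ‖g‖ ^ 2 := by
      simp only [hx2, mul_pow]; exact hΛup g
    have ty1 : ∑' j, y1 j ^ 2 ≤ B₂ * ‖h‖ ^ 2 := by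
      simp only [hy1, mul_pow]; exact hΓup h
    have ty2 : ∑' j, y2 j ^ 2 ≤ D * ‖g‖ ^ 2 := by
      simp only [hy2, mul_pow]; exact hpert g
    have hchain : ‖h‖ ^ 2 ≤ Real.sqrt D * (Real.sqrt B₁ + Real.sqrt B₂) * ‖g‖ * ‖h‖ := by
      calc ‖h‖ ^ 2
          = RCLike.re ⟪h, (SΛ : H →L[ℂ] H) g⟫_ℂ - RCLike.re ⟪h, (SΓ : H →L[ℂ] H) g⟫_ℂ := hnormsq
        _ = ∑' j, ((v j) ^ 2 * RCLike.re (⟪Λ j (gProj (W j) h), Λ j (gProj (W j) g)⟫_ℂ)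
            - (v j) ^ 2 * RCLike.re (⟪Γ j (gProj (V j) h), Γ j (gProj (V j) g)⟫_ℂ)) :=
            hsub.tsum_eq.symm
        _ ≤ ∑' j, (x1 j * x2 j + y1 j * y2 j) :=
            Summable.tsum_le_tsum hterm hsub.summable
              ((my_summable_mul hx1nn hx2nn sx1 sx2).add (my_summable_mul hy1nn hy2nn sy1 sy2))
        _ = (∑' j, x1 j * x2 j) + ∑' j, y1 j * y2 j :=
            Summable.tsum_add (my_summable_mul hx1nn hx2nn sx1 sx2) (my_summable_mul hy1nn hy2nn sy1 sy2)
        _ ≤ Real.sqrt (∑' j, x1 j ^ 2) * Real.sqrt (∑' j, x2 j ^ 2)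
            + Real.sqrt (∑' j, y1 j ^ 2) * Real.sqrt (∑' j, y2 j ^ 2) :=
            add_le_add (my_tsum_cs hx1nn hx2nn sx1 sx2) (my_tsum_cs hy1nn hy2nn sy1 sy2)
        _ ≤ Real.sqrt (D * ‖h‖ ^ 2) * Real.sqrt (B₁ * ‖g‖ ^ 2)
            + Real.sqrt (B₂ * ‖h‖ ^ 2) * Real.sqrt (D * ‖g‖ ^ 2) :=
            add_le_add
              (mul_le_mul (Real.sqrt_le_sqrt tx1) (Real.sqrt_le_sqrt tx2)
                (Real.sqrt_nonneg _) (Real.sqrt_nonneg _))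
              (mul_le_mul (Real.sqrt_le_sqrt ty1) (Real.sqrt_le_sqrt ty2)
                (Real.sqrt_nonneg _) (Real.sqrt_nonneg _))
        _ = Real.sqrt D * (Real.sqrt B₁ + Real.sqrt B₂) * ‖g‖ * ‖h‖ := by
            rw [Real.sqrt_mul hD.le (‖h‖^2), Real.sqrt_mul hB₁.le, Real.sqrt_mul hB₂.le,
              Real.sqrt_mul hD.le (‖g‖^2),
              Real.sqrt_sq (norm_nonneg h), Real.sqrt_sq (norm_nonneg g)]
            ring
    rcases (norm_nonneg h).eq_or_lt' with h0 | h0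
    · rw [h0]; positivity
    · nlinarith [hchain, h0]
  -- main estimate
  intro f
  set u : H := SΓ.symm f with hu
  set w : H := SΛ.symm f - u with hwdef
  have huf : ‖u‖ ≤ A₂⁻¹ * ‖f‖ := hΓsymm f
  have hfu : SΛ.symm f = u + w := by rw [hwdef]; abel
  have hwid : w = SΛ.symm ((SΓ : H →L[ℂ] H) u - (SΛ : H →L[ℂ] H) u) := by
    rw [hwdef, hu]
    simp [map_sub]
  have hwf : ‖w‖ ≤ A₁⁻¹ * (Real.sqrt D * (Real.sqrt B₁ + Real.sqrt B₂) * (A₂⁻¹ * ‖f‖)) := by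
    rw [hwid]
    refine (hΛsymm _).trans ?_
    have h1 : ‖(SΓ : H →L[ℂ] H) u - (SΛ : H →L[ℂ] H) u‖
        ≤ Real.sqrt D * (Real.sqrt B₁ + Real.sqrt B₂) * ‖u‖ := by
      rw [norm_sub_rev]; exact hdiff u
    have h2 : Real.sqrt D * (Real.sqrt B₁ + Real.sqrt B₂) * ‖u‖
        ≤ Real.sqrt D * (Real.sqrt B₁ + Real.sqrt B₂) * (A₂⁻¹ * ‖f‖) := by
      have : (0:ℝ) ≤ Real.sqrt D * (Real.sqrt B₁ + Real.sqrt B₂) := by positivity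
      exact mul_le_mul_of_nonneg_left huf this
    exact mul_le_mul_of_nonneg_left (h1.trans h2) (by positivity)
  set x : J → ℝ := fun j => v j * ‖Λ j (gProj (W j) u) - Γ j (gProj (V j) u)‖ with hx
  set y : J → ℝ := fun j => v j * ‖Λ j (gProj (W j) w)‖ with hy
  have hxnn : ∀ j, 0 ≤ x j := fun j => mul_nonneg (hv j).le (norm_nonneg _)
  have hynn : ∀ j, 0 ≤ y j := fun j => mul_nonneg (hv j).le (norm_nonneg _)
  have sx : Summable fun j => x j ^ 2 := by simp only [hx, mul_pow]; exact hpertsum u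
  have sy : Summable fun j => y j ^ 2 := by simp only [hy, mul_pow]; exact (hΛnorm w).summable
  have tx : ∑' j, x j ^ 2 ≤ D * ‖u‖ ^ 2 := by simp only [hx, mul_pow]; exact hpert u
  have ty : ∑' j, y j ^ 2 ≤ B₁ * ‖w‖ ^ 2 := by simp only [hy, mul_pow]; exact hΛup w
  have hterm : ∀ j, (v j) ^ 2 * ‖Λ j (gProj (W j) (SΛ.symm f)) - Γ j (gProj (V j) u)‖ ^ 2
      ≤ (x j + y j) ^ 2 := by
    intro j
    have hsplitf : Λ j (gProj (W j) (SΛ.symm f)) - Γ j (gProj (V j) u)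
        = (Λ j (gProj (W j) u) - Γ j (gProj (V j) u)) + Λ j (gProj (W j) w) := by
      rw [hfu, map_add, map_add]; abel
    rw [hsplitf]
    have ht := norm_add_le (Λ j (gProj (W j) u) - Γ j (gProj (V j) u)) (Λ j (gProj (W j) w))
    have hsq : ‖(Λ j (gProj (W j) u) - Γ j (gProj (V j) u)) + Λ j (gProj (W j) w)‖ ^ 2
        ≤ (‖Λ j (gProj (W j) u) - Γ j (gProj (V j) u)‖ + ‖Λ j (gProj (W j) w)‖) ^ 2 :=
      pow_le_pow_left₀ (norm_nonneg _) ht 2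
    calc (v j) ^ 2 * ‖(Λ j (gProj (W j) u) - Γ j (gProj (V j) u)) + Λ j (gProj (W j) w)‖ ^ 2
        ≤ (v j) ^ 2 * (‖Λ j (gProj (W j) u) - Γ j (gProj (V j) u)‖
            + ‖Λ j (gProj (W j) w)‖) ^ 2 := mul_le_mul_of_nonneg_left hsq (sq_nonneg _)
      _ = (x j + y j) ^ 2 := by simp only [hx, hy]; ring
  have hfinal : (Real.sqrt D * (A₂⁻¹ * ‖f‖)
      + Real.sqrt B₁ * (A₁⁻¹ * (Real.sqrt D * (Real.sqrt B₁ + Real.sqrt B₂) * (A₂⁻¹ * ‖f‖)))) ^ 2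
      = D * ((A₁ + B₁ + Real.sqrt B₁ * Real.sqrt B₂) / (A₁ * A₂)) ^ 2 * ‖f‖ ^ 2 := by
    set a : ℝ := Real.sqrt D with ha
    set b : ℝ := Real.sqrt B₁ with hb
    set c : ℝ := Real.sqrt B₂ with hc
    have hd2 : a ^ 2 = D := Real.sq_sqrt hD.le
    have hb2 : b ^ 2 = B₁ := Real.sq_sqrt hB₁.le
    rw [← hd2, ← hb2]
    field_simp
    ring
  calc (∑' j, (v j) ^ 2 * ‖Λ j (gProj (W j) (SΛ.symm f)) - Γ j (gProj (V j) u)‖ ^ 2)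
      ≤ ∑' j, (x j + y j) ^ 2 := by
        refine Summable.tsum_le_tsum hterm ?_ (my_summable_add_sq hxnn hynn sx sy)
        exact Summable.of_nonneg_of_le (fun j => by positivity) hterm
          (my_summable_add_sq hxnn hynn sx sy)
    _ ≤ (Real.sqrt (∑' j, x j ^ 2) + Real.sqrt (∑' j, y j ^ 2)) ^ 2 :=
        my_tsum_minkowski hxnn hynn sx sy
    _ ≤ (Real.sqrt D * (A₂⁻¹ * ‖f‖)
        + Real.sqrt B₁ * (A₁⁻¹ * (Real.sqrt D * (Real.sqrt B₁ + Real.sqrt B₂)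
            * (A₂⁻¹ * ‖f‖)))) ^ 2 := by
        refine pow_le_pow_left₀ (by positivity) (add_le_add ?_ ?_) 2
        · calc Real.sqrt (∑' j, x j ^ 2) ≤ Real.sqrt (D * ‖u‖ ^ 2) := Real.sqrt_le_sqrt tx
            _ = Real.sqrt D * ‖u‖ := by
                rw [Real.sqrt_mul hD.le, Real.sqrt_sq (norm_nonneg _)]
            _ ≤ Real.sqrt D * (A₂⁻¹ * ‖f‖) :=
                mul_le_mul_of_nonneg_left huf (Real.sqrt_nonneg _)
        · calc Real.sqrt (∑' j, y j ^ 2) ≤ Real.sqrt (B₁ * ‖w‖ ^ 2) := Real.sqrt_le_sqrt ty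
            _ = Real.sqrt B₁ * ‖w‖ := by
                rw [Real.sqrt_mul hB₁.le, Real.sqrt_sq (norm_nonneg _)]
            _ ≤ Real.sqrt B₁ * (A₁⁻¹ * (Real.sqrt D * (Real.sqrt B₁ + Real.sqrt B₂)
                * (A₂⁻¹ * ‖f‖))) :=
                mul_le_mul_of_nonneg_left hwf (Real.sqrt_nonneg _)
    _ = D * ((A₁ + B₁ + Real.sqrt B₁ * Real.sqrt B₂) / (A₁ * A₂)) ^ 2 * ‖f‖ ^ 2 := hfinal
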